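/- arXiv:1808.06779 — 3 statements merged into one kernel-verified Lean document; each statement's English description precedes it below -/
import Mathlib

section
/- For the kernel G^{(α)}(x) = min(|x|^{-α-1}, 1) with α > 0, there exists a constant C > 0 such that the convolution satisfies (G^{(α)} * G^{(α)})(x) = ∫_ℝ G^{(α)}(x-y) G^{(α)}(y) dy ≤ C · G^{(α)}(x) for all x ∈ ℝ. -/
open MeasureTheory

/-- The kernel `G^{(α)}(x) = min(|x|^{-α-1}, 1)`, with the convention `G^{(α)}(0) = 1`. -/
noncomputable def Gker (α x : ℝ) : ℝ := if x = 0 then 1 else min (|x| ^ (-α - 1)) 1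

lemma Gker_pos (α : ℝ) (x : ℝ) : 0 < Gker α x := by
  unfold Gker
  split
  · norm_num
  · rename_i hx
    exact lt_min (Real.rpow_pos_of_pos (abs_pos.mpr hx) _) one_pos

lemma Gker_le_one (α : ℝ) (x : ℝ) : Gker α x ≤ 1 := by
  unfold Gker
  split
  · exact le_rfl
  · exact min_le_right _ _

/-- monotonicity: bigger `|·|` gives smaller value. -/
lemma Gker_anti (α : ℝ) (hα : 0 < α) {s t : ℝ} (h : |s| ≤ |t|) : Gker α t ≤ Gker α s := by
  rcases eq_or_ne t 0 with ht | ht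
  · have hs : s = 0 := by
      have := abs_nonneg s
      have : |s| = 0 := le_antisymm (by simpa [ht] using h) (abs_nonneg s)
      exact abs_eq_zero.mp this
    simp [Gker, ht, hs]
  rcases eq_or_ne s 0 with hs | hs
  · simpa [Gker, hs] using Gker_le_one α t
  · simp only [Gker, ht, hs, if_false]
    refine min_le_min ?_ le_rfl
    exact Real.rpow_le_rpow_of_nonpos (abs_pos.mpr hs) h (by linarith)

lemma Gker_measurable (α : ℝ) : Measurable (Gker α) := by
  unfold Gker
  refine Measurable.ite (measurableSet_eq) measurable_const ?_
  exact ((measurable_abs.pow_const _).min measurable_const)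

lemma Gker_le_bracket (α : ℝ) (hα : 0 < α) (x : ℝ) :
    Gker α x ≤ 2 ^ (α + 1) * (1 + |x|) ^ (-(α + 1)) := by
  have h2 : (1 : ℝ) ≤ 2 ^ (α + 1) := Real.one_le_rpow (by norm_num) (by linarith)
  rcases le_or_gt (|x|) 1 with hx1 | hx1
  · have hb : (2 : ℝ) ^ (-(α + 1)) ≤ (1 + |x|) ^ (-(α + 1)) := by
      apply Real.rpow_le_rpow_of_nonpos (by positivity) (by linarith) (by linarith)
    calc Gker α x ≤ 1 := Gker_le_one α x
      _ = 2 ^ (α + 1) * 2 ^ (-(α + 1)) := by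
          rw [← Real.rpow_add (by norm_num), add_neg_cancel, Real.rpow_zero]
      _ ≤ 2 ^ (α + 1) * (1 + |x|) ^ (-(α + 1)) := by
          exact mul_le_mul_of_nonneg_left hb (by positivity)
  · have hx0 : x ≠ 0 := by
      intro h; rw [h] at hx1; simp at hx1; linarith
    have hb : (1 + |x|) ^ (-(α + 1)) ≥ (2 * |x|) ^ (-(α + 1)) := by
      apply Real.rpow_le_rpow_of_nonpos (by positivity) (by linarith) (by linarith)
    have h2x : (2 * |x|) ^ (-(α + 1)) = 2 ^ (-(α + 1)) * |x| ^ (-(α + 1)) :=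
      Real.mul_rpow (by norm_num) (abs_nonneg x)
    calc Gker α x ≤ |x| ^ (-α - 1) := by
          simp only [Gker, hx0, if_false]; exact min_le_left _ _
      _ = 2 ^ (α + 1) * (2 ^ (-(α + 1)) * |x| ^ (-(α + 1))) := by
          rw [← mul_assoc, ← Real.rpow_add (by norm_num)]
          simp [neg_sub]
          ring_nf
      _ = 2 ^ (α + 1) * (2 * |x|) ^ (-(α + 1)) := by rw [h2x]
      _ ≤ 2 ^ (α + 1) * (1 + |x|) ^ (-(α + 1)) := by
          exact mul_le_mul_of_nonneg_left hb (by positivity)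

lemma Gker_integrable (α : ℝ) (hα : 0 < α) : Integrable (Gker α) := by
  have hbr : Integrable (fun x : ℝ => (1 + ‖x‖) ^ (-(α + 1))) := by
    apply integrable_one_add_norm
    simp; linarith
  refine Integrable.mono' (hbr.const_mul (2 ^ (α + 1))) ((Gker_measurable α).aestronglyMeasurable) ?_
  filter_upwards with x
  rw [Real.norm_eq_abs, abs_of_pos (Gker_pos α x)]
  simpa [Real.norm_eq_abs] using Gker_le_bracket α hα x

/-- key doubling bound. -/
lemma Gker_half (α : ℝ) (hα : 0 < α) {x t : ℝ} (h : |x| ≤ 2 * |t|) :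
    Gker α t ≤ 2 ^ (α + 1) * Gker α x := by
  have h2 : (1 : ℝ) ≤ 2 ^ (α + 1) := Real.one_le_rpow (by norm_num) (by linarith)
  rcases eq_or_ne x 0 with hx | hx
  · have : Gker α x = 1 := by simp [Gker, hx]
    rw [this, mul_one]
    exact le_trans (Gker_le_one α t) h2
  · have ht : t ≠ 0 := by
      intro h0
      rw [h0] at h; simp at h
      exact hx h
    have hxpos : 0 < |x| := abs_pos.mpr hx
    have htpos : 0 < |t| := abs_pos.mpr ht
    simp only [Gker, hx, ht, if_false]
    have key : |t| ^ (-α - 1) ≤ 2 ^ (α + 1) * |x| ^ (-α - 1) := by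
      have h1 : |t| ^ (-α - 1) ≤ (|x| / 2) ^ (-α - 1) := by
        apply Real.rpow_le_rpow_of_nonpos (by positivity) (by linarith) (by linarith)
      have h2' : (|x| / 2) ^ (-α - 1) = 2 ^ (α + 1) * |x| ^ (-α - 1) := by
        rw [Real.div_rpow (abs_nonneg x) (by norm_num)]
        have h2e : (2:ℝ) ^ (-α - 1) = ((2:ℝ) ^ (α + 1))⁻¹ := by
          rw [← Real.rpow_neg (by norm_num)]; ring_nf
        rw [h2e, div_eq_mul_inv, inv_inv, mul_comm]
      rw [h2'] at h1; exact h1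
    calc min (|t| ^ (-α - 1)) 1 ≤ min (2 ^ (α + 1) * |x| ^ (-α - 1)) (2 ^ (α + 1) * 1) := by
          apply min_le_min key
          simpa using h2
      _ = 2 ^ (α + 1) * min (|x| ^ (-α - 1)) 1 := by
          rw [mul_min_of_nonneg _ _ (by positivity)]
      _ ≤ 2 ^ (α + 1) * min (|x| ^ (-α - 1)) 1 := le_rfl

theorem stmt4 (α : ℝ) (hα : 0 < α) :
    ∃ C > 0, ∀ x : ℝ, (∫ y : ℝ, Gker α (x - y) * Gker α y) ≤ C * Gker α x := by
  have hint := Gker_integrable α hα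
  set I := ∫ y : ℝ, Gker α y with hI
  have hIpos : 0 < I := by
    rw [hI, integral_pos_iff_support_of_nonneg (fun y => (Gker_pos α y).le) hint]
    have hs : Function.support (Gker α) = Set.univ := by
      ext y; simp [Function.support, (Gker_pos α y).ne']
    rw [hs]
    simp
  have h2p : (0:ℝ) < 2 ^ (α + 2) := Real.rpow_pos_of_pos (by norm_num) _
  refine ⟨2 ^ (α + 2) * I, by positivity, fun x => ?_⟩
  have hGx := Gker_pos α x
  have hpt : ∀ y : ℝ, Gker α (x - y) * Gker α y ≤
      2 ^ (α + 1) * Gker α x * (Gker α (x - y) + Gker α y) := by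
    intro y
    have habs : |x| ≤ |x - y| + |y| := by
      calc |x| = |(x - y) + y| := by ring_nf
        _ ≤ |x - y| + |y| := abs_add_le _ _
    rcases le_total (|x - y|) (|y|) with hc | hc
    · have h2 : |x| ≤ 2 * |y| := by linarith
      have hb := Gker_half α hα h2
      calc Gker α (x - y) * Gker α y
          ≤ Gker α (x - y) * (2 ^ (α + 1) * Gker α x) :=
            mul_le_mul_of_nonneg_left hb (Gker_pos α (x - y)).le
        _ = 2 ^ (α + 1) * Gker α x * Gker α (x - y) := by ring
        _ ≤ 2 ^ (α + 1) * Gker α x * (Gker α (x - y) + Gker α y) := by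
            apply mul_le_mul_of_nonneg_left _ (by positivity)
            linarith [(Gker_pos α y).le]
    · have h2 : |x| ≤ 2 * |x - y| := by linarith
      have hb := Gker_half α hα h2
      calc Gker α (x - y) * Gker α y
          ≤ (2 ^ (α + 1) * Gker α x) * Gker α y :=
            mul_le_mul_of_nonneg_right hb (Gker_pos α y).le
        _ = 2 ^ (α + 1) * Gker α x * Gker α y := by ring
        _ ≤ 2 ^ (α + 1) * Gker α x * (Gker α (x - y) + Gker α y) := by
            apply mul_le_mul_of_nonneg_left _ (by positivity)
            linarith [(Gker_pos α (x - y)).le]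
  have hconv_int : Integrable (fun y : ℝ => Gker α (x - y)) := hint.comp_sub_left x
  have hmaj : Integrable (fun y : ℝ =>
      2 ^ (α + 1) * Gker α x * (Gker α (x - y) + Gker α y)) :=
    (hconv_int.add hint).const_mul _
  have hle := integral_mono_of_nonneg
    (ae_of_all _ fun y => mul_nonneg (Gker_pos α (x - y)).le (Gker_pos α y).le)
    hmaj (ae_of_all _ hpt)
  have heq : (∫ y : ℝ, 2 ^ (α + 1) * Gker α x * (Gker α (x - y) + Gker α y))
      = 2 ^ (α + 1) * Gker α x * (I + I) := by
    rw [MeasureTheory.integral_const_mul, integral_add hconv_int hint,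
      integral_sub_left_eq_self (Gker α) volume x]
  have h22 : (2:ℝ) ^ (α + 2) = 2 ^ (α + 1) * 2 := by
    rw [show α + 2 = (α + 1) + 1 by ring, Real.rpow_add (by norm_num), Real.rpow_one]
  calc (∫ y : ℝ, Gker α (x - y) * Gker α y)
      ≤ 2 ^ (α + 1) * Gker α x * (I + I) := heq ▸ hle
    _ = 2 ^ (α + 2) * I * Gker α x := by rw [h22]; ring
end

section
/- Let f : ℝ → ℝ satisfy |f(x)-f(y)| ≤ M|x-y|^σ for |x-y| ≤ 1, σ ∈ [0,1], α ∈ (0,2), and define F_t(x) = (2√π t^{1/α})^{-1} ∫_ℝ exp(-z² t^{-2/α}) f(x-z) dz. Then for every T > 0 there is a constant C depending only on σ, α, T such that F_t is Lipschitz with Lipschitz constant at most C · M · t^{(σ-1)/α} for all t ∈ (0,T]. -/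
/-!
Rescaling `z = s w` with `s = t^{1/α}` turns `F_t` into `(2√π)⁻¹ G(x/s)`, where
`G ξ = ∫ exp(-w²) g(ξ - w) dw` is the unit Gaussian average of `g u = f(s u)`. Chaining the local
Hölder bound along unit steps gives `|f x - f y| ≤ M(|x - y|^σ + 2|x - y|)`, hence
`|g u - g v| ≤ L(1 + |u - v|)` with `L = M(s^σ + 2s)`. For such `g` the average `G` is Lipschitz
with constant `128√π L`: for a shift `|h| ≤ 1`, the kernel has the same mass after shifting, so
`G(η + h) - G η = ∫ (K(w + h) - K w)(g(η - w) - g η) dw`, where the kernel difference is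
`O(|h|(1 + |w|) e^{-w²/2})` and the second factor is `O(L(1 + |w|))`; longer shifts are chained
from unit ones. Undoing the scaling costs a factor `1/s`, and `(s^σ + 2s)/s ≤ C_T t^{(σ-1)/α}`.
-/

open MeasureTheory

/-- Gaussian mollification `F_t(x) = (2√π t^{1/α})⁻¹ ∫ exp(-z² t^{-2/α}) f(x-z) dz`. -/
noncomputable def moll (α : ℝ) (f : ℝ → ℝ) (t x : ℝ) : ℝ :=
  (2 * Real.sqrt Real.pi * t ^ (1 / α))⁻¹ *
    ∫ z : ℝ, Real.exp (-z ^ 2 * t ^ (-2 / α)) * f (x - z)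

open Real

theorem abs_sub_le_mul_of_forall_abs_sub_le (f : ℝ → ℝ) {x y B : ℝ} {n : ℕ} (hn : n ≠ 0)
    (hf : ∀ u v, |u - v| ≤ |x - y| / n → |f u - f v| ≤ B) :
    |f x - f y| ≤ n * B := by
  set p : ℕ → ℝ := fun k => y + k * ((x - y) / n)
  have hpn : p n = x := by simp only [p]; field_simp; ring
  have hstep : ∀ k, |p (k + 1) - p k| ≤ |x - y| / n := fun k => by
    simp only [p]; push_cast; rw [show y + (k + 1) * ((x - y) / n) - (y + k * ((x - y) / n))
      = (x - y) / n by ring, abs_div, Nat.abs_cast]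
  calc |f x - f y| = |∑ k ∈ Finset.range n, (f (p (k + 1)) - f (p k))| := by
        rw [Finset.sum_range_sub (fun k => f (p k)), hpn]
        simp [p]
    _ ≤ ∑ k ∈ Finset.range n, |f (p (k + 1)) - f (p k)| := Finset.abs_sum_le_sum_abs _ _
    _ ≤ ∑ _k ∈ Finset.range n, B := Finset.sum_le_sum fun k _ => hf _ _ (hstep k)
    _ = n * B := by simp

theorem abs_sub_le_mul_of_lipschitz_on_unit_steps (f : ℝ → ℝ) {K : ℝ}
    (hf : ∀ u v, |u - v| ≤ 1 → |f u - f v| ≤ K * |u - v|) (x y : ℝ) :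
    |f x - f y| ≤ K * |x - y| := by
  rcases eq_or_ne x y with rfl | hxy
  · simp
  have hK : 0 ≤ K := by simpa using (abs_nonneg _).trans (hf 1 0 (by norm_num))
  have hn : 0 < ⌈|x - y|⌉₊ := Nat.ceil_pos.2 (abs_pos.2 (sub_ne_zero.2 hxy))
  have hn' : (0 : ℝ) < ⌈|x - y|⌉₊ := Nat.cast_pos.2 hn
  calc |f x - f y| ≤ ⌈|x - y|⌉₊ * (K * (|x - y| / ⌈|x - y|⌉₊)) :=
        abs_sub_le_mul_of_forall_abs_sub_le f hn.ne' fun u v huv =>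
          (hf u v (huv.trans ((div_le_one hn').2 (Nat.le_ceil _)))).trans
            (mul_le_mul_of_nonneg_left huv hK)
    _ = K * |x - y| := by field_simp

theorem abs_sub_le_of_holder_on_unit_steps {f : ℝ → ℝ} {M σ : ℝ} (hσ : 0 ≤ σ)
    (hf : ∀ x y : ℝ, |x - y| ≤ 1 → |f x - f y| ≤ M * |x - y| ^ σ) (x y : ℝ) :
    |f x - f y| ≤ M * (|x - y| ^ σ + 2 * |x - y|) := by
  have hM : 0 ≤ M := by simpa using (abs_nonneg _).trans (hf 1 0 (by norm_num))
  rcases le_or_gt |x - y| 1 with h1 | h1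
  · exact (hf x y h1).trans (by nlinarith [abs_nonneg (x - y)])
  have hn : ⌈|x - y|⌉₊ ≠ 0 := (Nat.ceil_pos.2 (by linarith)).ne'
  calc |f x - f y| ≤ ⌈|x - y|⌉₊ * M :=
        abs_sub_le_mul_of_forall_abs_sub_le f hn fun u v huv => by
          have huv1 : |u - v| ≤ 1 :=
            huv.trans ((div_le_one (by positivity)).2 (Nat.le_ceil _))
          exact (hf u v huv1).trans
            (mul_le_of_le_one_right hM (rpow_le_one (abs_nonneg _) huv1 hσ))
    _ ≤ (|x - y| + 1) * M := by gcongr; exact (Nat.ceil_lt_add_one (abs_nonneg _)).le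
    _ ≤ M * (|x - y| ^ σ + 2 * |x - y|) := by
        nlinarith [rpow_nonneg (abs_nonneg (x - y)) σ]

theorem rpow_le_one_add {r σ : ℝ} (hr : 0 ≤ r) (hσ0 : 0 ≤ σ) (hσ1 : σ ≤ 1) : r ^ σ ≤ 1 + r := by
  rcases le_total r 1 with h | h
  · linarith [rpow_le_one hr h hσ0]
  · linarith [rpow_le_self_of_one_le h hσ1]

theorem abs_comp_mul_sub_le_of_holder_on_unit_steps {f : ℝ → ℝ} {M σ s : ℝ} (hσ0 : 0 ≤ σ)
    (hσ1 : σ ≤ 1) (hs : 0 ≤ s) (hf : ∀ x y : ℝ, |x - y| ≤ 1 → |f x - f y| ≤ M * |x - y| ^ σ)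
    (u v : ℝ) : |f (s * u) - f (s * v)| ≤ M * (s ^ σ + 2 * s) * (1 + |u - v|) := by
  have hM : 0 ≤ M := by simpa using (abs_nonneg _).trans (hf 1 0 (by norm_num))
  have hsr : |s * u - s * v| = s * |u - v| := by rw [← mul_sub, abs_mul, abs_of_nonneg hs]
  have hrσ := rpow_le_one_add (abs_nonneg (u - v)) hσ0 hσ1
  calc |f (s * u) - f (s * v)| ≤ M * ((s * |u - v|) ^ σ + 2 * (s * |u - v|)) := by
        simpa only [hsr] using abs_sub_le_of_holder_on_unit_steps hσ0 hf (s * u) (s * v)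
    _ = M * (s ^ σ * |u - v| ^ σ + 2 * s * |u - v|) := by
        rw [mul_rpow hs (abs_nonneg _)]; ring
    _ ≤ M * (s ^ σ * (1 + |u - v|) + 2 * s * (1 + |u - v|)) := by gcongr; linarith
    _ = M * (s ^ σ + 2 * s) * (1 + |u - v|) := by ring

theorem abs_exp_sub_exp_le (a b : ℝ) : |exp a - exp b| ≤ |a - b| * (exp a + exp b) := by
  wlog hba : b ≤ a generalizing a b
  · simpa only [abs_sub_comm, add_comm] using this b a (le_of_not_ge hba)
  have h := add_one_le_exp (b - a)
  have hexp : exp b = exp a * exp (b - a) := by rw [← exp_add]; ring_nf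
  rw [abs_of_nonneg (sub_nonneg.2 (exp_le_exp.2 hba)), abs_of_nonneg (sub_nonneg.2 hba)]
  nlinarith [exp_pos a, exp_pos b]

theorem one_add_mul_exp_neg_two_mul_le (x : ℝ) : (1 + x) * exp (-(2 * x)) ≤ exp (-x) := by
  have hx : (1 + x) * exp (-x) ≤ 1 := by
    calc (1 + x) * exp (-x) ≤ exp x * exp (-x) := by
          gcongr; linarith [add_one_le_exp x]
      _ = 1 := by rw [← exp_add, add_neg_cancel, exp_zero]
  calc (1 + x) * exp (-(2 * x)) = (1 + x) * exp (-x) * exp (-x) := by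
        rw [mul_assoc, ← exp_add]; ring_nf
    _ ≤ exp (-x) := mul_le_of_le_one_left (exp_pos _).le hx

theorem integrable_of_abs_le_gaussian {φ : ℝ → ℝ} (hφ : AEStronglyMeasurable φ) {A c : ℝ}
    (hc : 0 < c) (h : ∀ w, |φ w| ≤ A * exp (-c * w ^ 2)) : Integrable φ :=
  ((integrable_exp_neg_mul_sq hc).const_mul A).mono' hφ (.of_forall h)

theorem abs_integral_le_of_abs_le_gaussian {φ : ℝ → ℝ} {A c : ℝ} (hc : 0 < c)
    (h : ∀ w, |φ w| ≤ A * exp (-c * w ^ 2)) : |∫ w, φ w| ≤ A * √(π / c) := by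
  rw [← integral_gaussian, ← integral_const_mul]
  exact norm_integral_le_of_norm_le (f := φ) ((integrable_exp_neg_mul_sq hc).const_mul A)
    (.of_forall h)

theorem abs_exp_neg_add_sq_sub_le {h : ℝ} (hh : |h| ≤ 1) (w : ℝ) :
    |exp (-(w + h) ^ 2) - exp (-w ^ 2)| ≤ 4 * |h| * (1 + 2 * |w|) * exp (-(1 / 2) * w ^ 2) := by
  have hdiff : |-(w + h) ^ 2 - -w ^ 2| ≤ |h| * (1 + 2 * |w|) := by
    rw [show -(w + h) ^ 2 - -w ^ 2 = -(h * (2 * w + h)) by ring, abs_neg, abs_mul]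
    gcongr
    calc |2 * w + h| ≤ |2 * w| + |h| := abs_add_le _ _
      _ ≤ 1 + 2 * |w| := by rw [abs_mul, abs_two]; linarith
  -- `(w + h)² ≥ w²/2 - h²`, so the shifted kernel is still dominated by the wider Gaussian.
  have hshifted : exp (-(w + h) ^ 2) ≤ 3 * exp (-(1 / 2) * w ^ 2) := by
    have hh2 : h ^ 2 ≤ 1 := by nlinarith [sq_abs h, abs_nonneg h]
    calc exp (-(w + h) ^ 2) ≤ exp (1 + -(1 / 2) * w ^ 2) :=
          exp_le_exp.2 (by nlinarith [sq_nonneg (w + 2 * h)])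
      _ ≤ 3 * exp (-(1 / 2) * w ^ 2) := by
          rw [exp_add]; gcongr; exact (exp_one_lt_d9.trans (by norm_num)).le
  have hcentred : exp (-w ^ 2) ≤ exp (-(1 / 2) * w ^ 2) := exp_le_exp.2 (by nlinarith [sq_nonneg w])
  calc |exp (-(w + h) ^ 2) - exp (-w ^ 2)|
      ≤ |-(w + h) ^ 2 - -w ^ 2| * (exp (-(w + h) ^ 2) + exp (-w ^ 2)) := abs_exp_sub_exp_le _ _
    _ ≤ (|h| * (1 + 2 * |w|)) * (4 * exp (-(1 / 2) * w ^ 2)) := by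
        gcongr
        linarith
    _ = 4 * |h| * (1 + 2 * |w|) * exp (-(1 / 2) * w ^ 2) := by ring

noncomputable def gaussConv (g : ℝ → ℝ) (ξ : ℝ) : ℝ := ∫ w, exp (-w ^ 2) * g (ξ - w)

section GaussConv

variable {g : ℝ → ℝ} {L : ℝ}

theorem integrable_exp_neg_sq_mul_comp_sub (hgm : Measurable g)
    (hg : ∀ u v, |g u - g v| ≤ L * (1 + |u - v|)) (ξ : ℝ) :
    Integrable fun w => exp (-w ^ 2) * g (ξ - w) := by
  have hL : 0 ≤ L := by simpa using (abs_nonneg _).trans (hg 0 0)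
  refine integrable_of_abs_le_gaussian (by fun_prop) (c := 1 / 2) (A := 2 * (|g ξ| + L))
    (by norm_num) fun w => ?_
  have hgw : |g (ξ - w)| ≤ (|g ξ| + L) * (1 + |w|) := by
    have := hg (ξ - w) ξ
    rw [show ξ - w - ξ = -w by ring, abs_neg] at this
    nlinarith [abs_sub_abs_le_abs_sub (g (ξ - w)) (g ξ), abs_nonneg (g ξ), abs_nonneg w]
  have hw : 1 + |w| ≤ 2 * (1 + w ^ 2 / 2) := by nlinarith [sq_abs w, abs_nonneg w]
  have hexp := one_add_mul_exp_neg_two_mul_le (w ^ 2 / 2)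
  rw [show 2 * (w ^ 2 / 2) = w ^ 2 by ring, show -(w ^ 2 / 2) = -(1 / 2) * w ^ 2 by ring] at hexp
  rw [abs_mul, abs_of_pos (exp_pos _)]
  calc exp (-w ^ 2) * |g (ξ - w)| ≤ exp (-w ^ 2) * ((|g ξ| + L) * (2 * (1 + w ^ 2 / 2))) := by
        gcongr; exact hgw.trans (by gcongr)
    _ = 2 * (|g ξ| + L) * ((1 + w ^ 2 / 2) * exp (-w ^ 2)) := by ring
    _ ≤ 2 * (|g ξ| + L) * exp (-(1 / 2) * w ^ 2) := by gcongr

theorem gaussConv_add_sub (hgm : Measurable g) (hg : ∀ u v, |g u - g v| ≤ L * (1 + |u - v|))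
    (η h : ℝ) :
    gaussConv g (η + h) - gaussConv g η =
      ∫ w, (exp (-(w + h) ^ 2) - exp (-w ^ 2)) * (g (η - w) - g η) := by
  have hshift : gaussConv g (η + h) = ∫ w, exp (-(w + h) ^ 2) * g (η - w) := by
    rw [gaussConv, ← integral_add_right_eq_self _ h]
    simp only [add_sub_add_right_eq_sub]
  have hmass : ∫ w, exp (-(w + h) ^ 2) = ∫ w, exp (-w ^ 2) :=
    integral_add_right_eq_self (fun w => exp (-w ^ 2)) h
  have hK : Integrable fun w : ℝ => exp (-w ^ 2) := by
    simpa using integrable_exp_neg_mul_sq one_pos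
  have hKh : Integrable fun w : ℝ => exp (-(w + h) ^ 2) := hK.comp_add_right h
  have hI : Integrable fun w => exp (-w ^ 2) * g (η - w) :=
    integrable_exp_neg_sq_mul_comp_sub hgm hg η
  have hIh : Integrable fun w => exp (-(w + h) ^ 2) * g (η - w) := by
    simpa only [add_sub_add_right_eq_sub] using
      (integrable_exp_neg_sq_mul_comp_sub hgm hg (η + h)).comp_add_right h
  calc gaussConv g (η + h) - gaussConv g η
      = (∫ w, exp (-(w + h) ^ 2) * g (η - w)) - (∫ w, exp (-w ^ 2) * g (η - w))
          - ((∫ w, exp (-(w + h) ^ 2)) - ∫ w, exp (-w ^ 2)) * g η := by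
        rw [hmass, hshift, gaussConv]; ring
    _ = ∫ w, (exp (-(w + h) ^ 2) - exp (-w ^ 2)) * (g (η - w) - g η) := by
        rw [← integral_sub hIh hI, ← integral_sub hKh hK, ← integral_mul_const, ← integral_sub]
        · congr 1 with w
          ring
        · exact hIh.sub hI
        · exact (hKh.sub hK).mul_const _

theorem abs_gaussConv_add_sub_le (hgm : Measurable g)
    (hg : ∀ u v, |g u - g v| ≤ L * (1 + |u - v|)) (η : ℝ) {h : ℝ} (hh : |h| ≤ 1) :
    |gaussConv g (η + h) - gaussConv g η| ≤ 128 * √π * L * |h| := by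
  have hL : 0 ≤ L := by simpa using (abs_nonneg _).trans (hg 0 0)
  rw [gaussConv_add_sub hgm hg]
  have hbound : ∀ w, |(exp (-(w + h) ^ 2) - exp (-w ^ 2)) * (g (η - w) - g η)|
      ≤ 64 * L * |h| * exp (-(1 / 4) * w ^ 2) := fun w => by
    have hgw : |g (η - w) - g η| ≤ L * (1 + |w|) := by
      simpa [abs_neg] using hg (η - w) η
    have hpoly : (1 + 2 * |w|) * (1 + |w|) ≤ 16 * (1 + w ^ 2 / 4) := by
      nlinarith [sq_abs w, abs_nonneg w]
    have hexp := one_add_mul_exp_neg_two_mul_le (w ^ 2 / 4)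
    rw [show 2 * (w ^ 2 / 4) = 1 / 2 * w ^ 2 by ring,
      show -(w ^ 2 / 4) = -(1 / 4) * w ^ 2 by ring, ← neg_mul] at hexp
    rw [abs_mul]
    calc |exp (-(w + h) ^ 2) - exp (-w ^ 2)| * |g (η - w) - g η|
        ≤ (4 * |h| * (1 + 2 * |w|) * exp (-(1 / 2) * w ^ 2)) * (L * (1 + |w|)) := by
          gcongr
          exact abs_exp_neg_add_sq_sub_le hh w
      _ = 4 * L * |h| * ((1 + 2 * |w|) * (1 + |w|)) * exp (-(1 / 2) * w ^ 2) := by ring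
      _ ≤ 4 * L * |h| * (16 * (1 + w ^ 2 / 4)) * exp (-(1 / 2) * w ^ 2) := by gcongr
      _ ≤ 64 * L * |h| * exp (-(1 / 4) * w ^ 2) := by
          rw [show 4 * L * |h| * (16 * (1 + w ^ 2 / 4)) * exp (-(1 / 2) * w ^ 2)
            = 64 * L * |h| * ((1 + w ^ 2 / 4) * exp (-(1 / 2) * w ^ 2)) by ring]
          gcongr
  have hsqrt : √(π / (1 / 4)) = 2 * √π := by
    rw [div_div_eq_mul_div, div_one, mul_comm, sqrt_mul zero_le_four,
      show (4 : ℝ) = 2 ^ 2 by norm_num, sqrt_sq zero_le_two]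
  calc _ ≤ 64 * L * |h| * √(π / (1 / 4)) := abs_integral_le_of_abs_le_gaussian (by norm_num) hbound
    _ = 128 * √π * L * |h| := by rw [hsqrt]; ring

theorem abs_gaussConv_sub_le (hgm : Measurable g)
    (hg : ∀ u v, |g u - g v| ≤ L * (1 + |u - v|)) (ξ η : ℝ) :
    |gaussConv g ξ - gaussConv g η| ≤ 128 * √π * L * |ξ - η| :=
  abs_sub_le_mul_of_lipschitz_on_unit_steps _ (fun ξ η hξη => by
    simpa using abs_gaussConv_add_sub_le hgm hg η (h := ξ - η) hξη) ξ η

end GaussConv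

theorem moll_eq_gaussConv (α : ℝ) (f : ℝ → ℝ) {t : ℝ} (ht : 0 < t) (x : ℝ) :
    moll α f t x = (2 * √π)⁻¹ * gaussConv (fun u => f (t ^ (1 / α) * u)) (x / t ^ (1 / α)) := by
  set s := t ^ (1 / α)
  have hs : 0 < s := rpow_pos_of_pos ht _
  have hts : t ^ (-2 / α) = (s ^ 2)⁻¹ := by
    rw [← rpow_natCast, ← rpow_mul ht.le, ← rpow_neg ht.le]; congr 1; push_cast; ring
  have hrescale : ∀ w, exp (-(s * w) ^ 2 * t ^ (-2 / α)) * f (x - s * w)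
      = exp (-w ^ 2) * f (s * (x / s - w)) := fun w => by
    rw [hts]; congr 2 <;> field_simp
  have hint := Measure.integral_comp_mul_left (fun z => exp (-z ^ 2 * t ^ (-2 / α)) * f (x - z)) s
  simp only [hrescale, abs_inv, abs_of_pos hs, smul_eq_mul] at hint
  rw [moll, gaussConv, hint, mul_inv]
  ring

theorem rpow_add_two_mul_div_le {α σ t T : ℝ} (hα : 0 < α) (hσ : σ ≤ 1) (ht : 0 < t)
    (htT : t ≤ T) :
    ((t ^ (1 / α)) ^ σ + 2 * t ^ (1 / α)) / t ^ (1 / α)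
      ≤ (1 + 2 * T ^ ((1 - σ) / α)) * t ^ ((σ - 1) / α) := by
  have hs : 0 < t ^ (1 / α) := rpow_pos_of_pos ht _
  have hpow : (t ^ (1 / α)) ^ σ / t ^ (1 / α) = t ^ ((σ - 1) / α) := by
    rw [← rpow_sub_one hs.ne', ← rpow_mul ht.le]; ring_nf
  have hone : 1 = t ^ ((1 - σ) / α) * t ^ ((σ - 1) / α) := by
    rw [← rpow_add ht]; ring_nf; simp
  have hmono : t ^ ((1 - σ) / α) ≤ T ^ ((1 - σ) / α) :=
    rpow_le_rpow ht.le htT (div_nonneg (by linarith) hα.le)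
  rw [add_div, hpow, mul_div_assoc, div_self hs.ne']
  nlinarith [rpow_pos_of_pos ht ((σ - 1) / α)]

theorem stmt10_general (σ α T : ℝ) (hσ0 : 0 ≤ σ) (hσ1 : σ ≤ 1) (hα0 : 0 < α)
    (hT : 0 < T) :
    ∃ C > 0, ∀ (f : ℝ → ℝ) (M : ℝ), Measurable f → 0 ≤ M →
      (∀ x y : ℝ, |x - y| ≤ 1 → |f x - f y| ≤ M * |x - y| ^ σ) →
      ∀ t ∈ Set.Ioc (0:ℝ) T, ∀ x y : ℝ,
        |moll α f t x - moll α f t y| ≤ C * M * t ^ ((σ - 1) / α) * |x - y| := by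
  refine ⟨64 * (1 + 2 * T ^ ((1 - σ) / α)), by positivity, ?_⟩
  rintro f M hfm hM hf t ⟨ht, htT⟩ x y
  set s := t ^ (1 / α)
  have hs : 0 < s := rpow_pos_of_pos ht _
  have hgauss := abs_gaussConv_sub_le (g := fun u => f (s * u)) (by fun_prop)
    (abs_comp_mul_sub_le_of_holder_on_unit_steps hσ0 hσ1 hs.le hf) (x / s) (y / s)
  rw [moll_eq_gaussConv α f ht, moll_eq_gaussConv α f ht, ← mul_sub, abs_mul,
    abs_of_pos (by positivity)]
  calc _ ≤ (2 * √π)⁻¹ * (128 * √π * (M * (s ^ σ + 2 * s)) * |x / s - y / s|) := by gcongr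
    _ = 64 * M * ((s ^ σ + 2 * s) / s) * |x - y| := by
        rw [← sub_div, abs_div, abs_of_pos hs]; field_simp; ring
    _ ≤ 64 * M * ((1 + 2 * T ^ ((1 - σ) / α)) * t ^ ((σ - 1) / α)) * |x - y| := by
        gcongr; exact rpow_add_two_mul_div_le hα0 hσ1 ht htT
    _ = _ := by ring

theorem stmt10 (σ α T : ℝ) (hσ0 : 0 ≤ σ) (hσ1 : σ ≤ 1) (hα0 : 0 < α) (hα2 : α < 2)
    (hT : 0 < T) :
    ∃ C > 0, ∀ (f : ℝ → ℝ) (M : ℝ), Measurable f → 0 ≤ M →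
      (∀ x y : ℝ, |x - y| ≤ 1 → |f x - f y| ≤ M * |x - y| ^ σ) →
      ∀ t ∈ Set.Ioc (0:ℝ) T, ∀ x y : ℝ,
        |moll α f t x - moll α f t y| ≤ C * M * t ^ ((σ - 1) / α) * |x - y| :=
  stmt10_general σ α T hσ0 hσ1 hα0 hT
end

section
/- For α, β, γ > 0, the kernel G^{(α,β,γ)}_t(x,y) (defined piecewise as t^{-1/α} for |y-x| ≤ min(t^{1/α},1), t^{β/α}|y-x|^{-β-1} for min(t^{1/α},1) < |y-x| ≤ 1, and t^{β/α}|y-x|^{-γ-1} for |y-x| > 1) has the sub-convolution property: for every T > 0 there exists C such that ∫_ℝ G^{(α,β,γ)}_{t-s}(x,z) G^{(α,β,γ)}_s(z,y) dz ≤ C · G^{(α,β,γ)}_t(x,y) for all t ∈ (0,T], s ∈ (0,t), and x,y ∈ ℝ. -/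
open MeasureTheory

/-- The three-regime kernel `G^{(α,β,γ)}_t(x,y)`. -/
noncomputable def G3 (α β γ t x y : ℝ) : ℝ :=
  if |y - x| ≤ min (t ^ (1 / α)) 1 then t ^ (-1 / α)
  else if |y - x| ≤ 1 then t ^ (β / α) * |y - x| ^ (-β - 1)
  else t ^ (β / α) * |y - x| ^ (-γ - 1)

/-!
Write `G_t(x, y) = profile t |y - x|`: a plateau of height `t^(-1/α)` on
`|y - x| ≤ min (t^(1/α)) 1`, then `t^(β/α)` times a decreasing power tail. For `t ≤ T` the profile
is bounded by `B_T t^(-1/α)`, and it is doubling: `profile t (r/2) ≲ profile t r`. Hence for each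
`z` one of the two factors of the convolution is `≲ G_t(x, y)`: if `|y - x|` is at most twice the
plateau, the factor with time `≥ t/2` is `≲ t^(-1/α) = profile t (|y - x|/2)`; otherwise the
factor with spatial argument `≥ |y - x|/2` is beyond its plateau, where the profile increases in
time and decreases in space, so it is `≤ profile t (|y - x|/2)`. Thus
`G_{t-s} G_s ≲ G_t (G_{t-s} + G_s)`, and the integrals of `G_u(x, ·)` are bounded for `u ≤ T`.
-/

open Set Real

lemma integrable_comp_abs_of_integrableOn_Ioi {f : ℝ → ℝ} (hf : IntegrableOn f (Ioi 0)) :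
    Integrable (fun x => f |x|) := by
  have hIoi : IntegrableOn (fun x => f |x|) (Ioi 0) :=
    hf.congr_fun (fun x hx => by rw [abs_of_pos hx]) measurableSet_Ioi
  have hIic : IntegrableOn (fun x => f |x|) (Iic 0) := by
    rw [← Measure.map_neg_eq_self (volume : Measure ℝ),
      measurableEmbedding_neg.integrableOn_map_iff]
    simp_rw [Function.comp_def, abs_neg, neg_preimage, neg_Iic, neg_zero]
    exact Iff.mpr integrableOn_Ici_iff_integrableOn_Ioi hIoi
  rw [← integrableOn_univ, ← Iic_union_Ioi (a := (0:ℝ))]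
  exact hIic.union hIoi

lemma integral_mul_le_of_forall_le_or_le {X : Type*} [MeasurableSpace X] {μ : Measure X}
    {f g : X → ℝ} {D : ℝ} (hf : Integrable f μ) (hg : Integrable g μ) (hf0 : ∀ x, 0 ≤ f x)
    (hg0 : ∀ x, 0 ≤ g x) (h : ∀ x, f x ≤ D ∨ g x ≤ D) :
    ∫ x, f x * g x ∂μ ≤ D * (∫ x, f x ∂μ + ∫ x, g x ∂μ) := by
  have hpt : ∀ x, f x * g x ≤ D * (f x + g x) := fun x => by
    rcases h x with h | h <;> nlinarith [hf0 x, hg0 x]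
  rw [← integral_add hf hg, ← integral_const_mul]
  exact integral_mono_of_nonneg (.of_forall fun x => mul_nonneg (hf0 x) (hg0 x))
    ((hf.add hg).const_mul D) (.of_forall hpt)

lemma rpow_le_max_one_rpow {u T e : ℝ} (hu : 0 ≤ u) (huT : u ≤ T) (he : 0 ≤ e) :
    u ^ e ≤ max 1 (T ^ e) := by
  rcases le_total u 1 with h | h
  · exact le_max_of_le_left (rpow_le_one hu h he)
  · exact le_max_of_le_right (rpow_le_rpow hu huT he)

lemma rpow_neg_eq_two_rpow_mul {ρ : ℝ} (hρ : 0 ≤ ρ) (e : ℝ) :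
    ρ ^ (-e) = 2 ^ e * (2 * ρ) ^ (-e) := by
  rw [mul_rpow zero_le_two hρ, ← mul_assoc, ← rpow_add two_pos, add_neg_cancel, rpow_zero,
    one_mul]

namespace G3

noncomputable def plateau (α u : ℝ) : ℝ := min (u ^ (1 / α)) 1

noncomputable def tail (β γ ρ : ℝ) : ℝ := if ρ ≤ 1 then ρ ^ (-(β + 1)) else ρ ^ (-(γ + 1))

noncomputable def profile (α β γ u ρ : ℝ) : ℝ :=
  if ρ ≤ plateau α u then u ^ (-1 / α) else u ^ (β / α) * tail β γ ρ

variable {α β γ T t u ρ : ℝ}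

lemma _root_.G3_eq_profile (x y : ℝ) : G3 α β γ t x y = profile α β γ t |y - x| := by
  unfold G3 profile plateau tail
  simp only [neg_add']
  split_ifs <;> rfl

lemma plateau_pos (hu : 0 < u) : 0 < plateau α u := lt_min (rpow_pos_of_pos hu _) one_pos

lemma plateau_le_one : plateau α u ≤ 1 := min_le_right _ _

lemma plateau_le_rpow : plateau α u ≤ u ^ (1 / α) := min_le_left _ _

lemma plateau_mono (hα : 0 < α) (hu : 0 ≤ u) (hut : u ≤ t) : plateau α u ≤ plateau α t :=
  min_le_min_right _ (rpow_le_rpow hu hut (by positivity))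

lemma plateau_rpow_neg (hu : 0 < u) {e : ℝ} (he : 0 ≤ e) :
    plateau α u ^ (-e) = max (u ^ (-e / α)) 1 := by
  have hpow : (u ^ (1 / α)) ^ (-e) = u ^ (-e / α) := by
    rw [← rpow_mul hu.le]; ring_nf
  unfold plateau
  rcases le_total (u ^ (1 / α)) 1 with h | h
  · rw [min_eq_left h, hpow, max_eq_left]
    exact hpow ▸ one_le_rpow_of_pos_of_le_one_of_nonpos (rpow_pos_of_pos hu _) h (by linarith)
  · rw [min_eq_right h, one_rpow, max_eq_right]
    exact hpow ▸ rpow_le_one_of_one_le_of_nonpos h (by linarith)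

lemma rpow_mul_plateau_rpow_neg (hu : 0 < u) (a : ℝ) {b : ℝ} (hb : 0 ≤ b) :
    u ^ (a / α) * plateau α u ^ (-b) = max (u ^ ((a - b) / α)) (u ^ (a / α)) := by
  rw [plateau_rpow_neg hu hb, mul_max_of_nonneg _ _ (rpow_nonneg hu.le _), mul_one,
    ← rpow_add hu]
  ring_nf

lemma tail_pos (hρ : 0 < ρ) : 0 < tail β γ ρ := by
  unfold tail; split_ifs <;> exact rpow_pos_of_pos hρ _

lemma tail_of_le_one (h : ρ ≤ 1) : tail β γ ρ = ρ ^ (-(β + 1)) := if_pos h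

lemma tail_of_one_lt (h : 1 < ρ) : tail β γ ρ = ρ ^ (-(γ + 1)) := if_neg h.not_ge

lemma tail_antitoneOn (hβ : 0 < β) (hγ : 0 < γ) : AntitoneOn (tail β γ) (Ioi 0) := by
  intro a (ha : 0 < a) b _ hab
  rcases le_or_gt b 1 with hb | hb
  · rw [tail_of_le_one hb, tail_of_le_one (hab.trans hb)]
    exact rpow_le_rpow_of_nonpos ha hab (by linarith)
  rw [tail_of_one_lt hb]
  rcases le_or_gt a 1 with ha1 | ha1
  · rw [tail_of_le_one ha1]
    exact (rpow_le_one_of_one_le_of_nonpos hb.le (by linarith)).trans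
      (one_le_rpow_of_pos_of_le_one_of_nonpos ha ha1 (by linarith))
  · rw [tail_of_one_lt ha1]
    exact rpow_le_rpow_of_nonpos ha hab (by linarith)

lemma tail_le_two_rpow_mul_tail_two_mul (hβ : 0 < β) (hγ : 0 < γ) (hρ : 0 < ρ) :
    tail β γ ρ ≤ 2 ^ (β + 1) * 2 ^ (γ + 1) * tail β γ (2 * ρ) := by
  have hβ1 : (1 : ℝ) ≤ 2 ^ (β + 1) := one_le_rpow one_le_two (by linarith)
  have hγ1 : (1 : ℝ) ≤ 2 ^ (γ + 1) := one_le_rpow one_le_two (by linarith)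
  have hdouble := rpow_neg_eq_two_rpow_mul hρ.le
  rcases le_or_gt (2 * ρ) 1 with h2 | h2
  · rw [tail_of_le_one (by linarith), tail_of_le_one h2, hdouble, mul_right_comm]
    exact le_mul_of_one_le_right (by positivity) hγ1
  rw [tail_of_one_lt h2]
  rcases le_or_gt ρ 1 with h1 | h1
  · -- both factors are compared with `1`: `(2ρ)^{-(β+1)} ≤ 1 ≤ ρ^{-(γ+1)}`
    calc tail β γ ρ = 2 ^ (β + 1) * (2 * ρ) ^ (-(β + 1)) := by rw [tail_of_le_one h1, hdouble]
      _ ≤ 2 ^ (β + 1) * ρ ^ (-(γ + 1)) := by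
        gcongr
        exact (rpow_le_one_of_one_le_of_nonpos h2.le (by linarith)).trans
          (one_le_rpow_of_pos_of_le_one_of_nonpos hρ h1 (by linarith))
      _ = 2 ^ (β + 1) * 2 ^ (γ + 1) * (2 * ρ) ^ (-(γ + 1)) := by rw [hdouble, mul_assoc]
  · rw [tail_of_one_lt h1, hdouble]
    exact mul_le_mul_of_nonneg_right (le_mul_of_one_le_left (by positivity) hβ1)
      (by positivity)

lemma integrableOn_tail_Ioi (hβ : 0 < β) (hγ : 0 < γ) {m : ℝ} (hm : 0 < m) :
    IntegrableOn (tail β γ) (Ioi m) := by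
  refine IntegrableOn.mono_set (IntegrableOn.union ?_ ?_) (t := Ioc m 1 ∪ Ioi 1) ?_
  · refine ((integrableOn_Ioi_rpow_of_lt (by linarith : -(β + 1) < -1) hm).mono_set
      Ioc_subset_Ioi_self).congr_fun (fun ρ hρ => (tail_of_le_one hρ.2).symm) measurableSet_Ioc
  · exact (integrableOn_Ioi_rpow_of_lt (by linarith : -(γ + 1) < -1) one_pos).congr_fun
      (fun ρ hρ => (tail_of_one_lt hρ).symm) measurableSet_Ioi
  · intro ρ (hρ : m < ρ)
    rcases le_or_gt ρ 1 with h | h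
    exacts [Or.inl ⟨hρ, h⟩, Or.inr h]

lemma setIntegral_tail_Ioi_le (hβ : 0 < β) (hγ : 0 < γ) {m : ℝ} (hm : 0 < m) (hm1 : m ≤ 1) :
    ∫ ρ in Ioi m, tail β γ ρ ≤ m ^ (-β) / β + 1 / γ := by
  have hnear : ∫ ρ in Ioc m 1, tail β γ ρ ≤ m ^ (-β) / β := by
    rw [setIntegral_congr_fun measurableSet_Ioc (fun ρ hρ => tail_of_le_one hρ.2),
      ← intervalIntegral.integral_of_le hm1,
      integral_rpow (Or.inr ⟨by linarith, notMem_uIcc_of_lt hm one_pos⟩),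
      show -(β + 1) + 1 = -β by ring, one_rpow, div_neg, ← neg_div, neg_sub]
    gcongr
    linarith
  have hfar : ∫ ρ in Ioi 1, tail β γ ρ = 1 / γ := by
    rw [setIntegral_congr_fun measurableSet_Ioi (fun ρ hρ => tail_of_one_lt hρ),
      integral_Ioi_rpow_of_lt (by linarith) one_pos, show -(γ + 1) + 1 = -γ by ring, one_rpow,
      div_neg, neg_div, neg_neg]
  have hint := integrableOn_tail_Ioi hβ hγ hm
  rw [← Ioc_union_Ioi_eq_Ioi hm1, setIntegral_union Ioc_disjoint_Ioi_same measurableSet_Ioi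
    (hint.mono_set Ioc_subset_Ioi_self) (hint.mono_set (Ioi_subset_Ioi hm1)), hfar]
  linarith

lemma profile_of_le_plateau (h : ρ ≤ plateau α u) : profile α β γ u ρ = u ^ (-1 / α) := if_pos h

lemma profile_of_plateau_lt (h : plateau α u < ρ) :
    profile α β γ u ρ = u ^ (β / α) * tail β γ ρ := if_neg h.not_ge

lemma profile_pos (hu : 0 < u) : 0 < profile α β γ u ρ := by
  rcases le_or_gt ρ (plateau α u) with h | h
  · rw [profile_of_le_plateau h]; exact rpow_pos_of_pos hu _
  · rw [profile_of_plateau_lt h]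
    exact mul_pos (rpow_pos_of_pos hu _) (tail_pos ((plateau_pos hu).trans h))

lemma rpow_mul_tail_plateau (hβ : 0 < β) (hu : 0 < u) :
    u ^ (β / α) * tail β γ (plateau α u) = max (u ^ (-1 / α)) (u ^ (β / α)) := by
  rw [tail_of_le_one plateau_le_one, rpow_mul_plateau_rpow_neg hu β (by linarith),
    show (β - (β + 1)) / α = -1 / α by ring]

lemma profile_le_mul_rpow_neg (hα : 0 < α) (hβ : 0 < β) (hγ : 0 < γ) (hu : 0 < u)
    (huT : u ≤ T) : profile α β γ u ρ ≤ max 1 (T ^ ((β + 1) / α)) * u ^ (-1 / α) := by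
  have hB : 1 ≤ max 1 (T ^ ((β + 1) / α)) := le_max_left _ _
  have hp := plateau_pos (α := α) hu
  rcases le_or_gt ρ (plateau α u) with h | h
  · rw [profile_of_le_plateau h]
    exact le_mul_of_one_le_left (rpow_pos_of_pos hu _).le hB
  calc profile α β γ u ρ = u ^ (β / α) * tail β γ ρ := profile_of_plateau_lt h
    _ ≤ u ^ (β / α) * tail β γ (plateau α u) := by
      gcongr
      exact tail_antitoneOn hβ hγ hp (hp.trans h) h.le
    _ = max (u ^ (-1 / α)) (u ^ (β / α)) := rpow_mul_tail_plateau hβ hu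
    _ ≤ max 1 (T ^ ((β + 1) / α)) * u ^ (-1 / α) := by
      refine max_le (le_mul_of_one_le_left (rpow_pos_of_pos hu _).le hB) ?_
      calc u ^ (β / α) = u ^ ((β + 1) / α) * u ^ (-1 / α) := by
            rw [← rpow_add hu]; ring_nf
        _ ≤ max 1 (T ^ ((β + 1) / α)) * u ^ (-1 / α) := by
            gcongr
            exact rpow_le_max_one_rpow hu.le huT (by positivity)

lemma profile_le_two_rpow_mul_profile_two_mul (hβ : 0 < β) (hγ : 0 < γ) (hu : 0 < u) :
    profile α β γ u ρ ≤ 2 ^ (β + 1) * 2 ^ (γ + 1) * profile α β γ u (2 * ρ) := by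
  have hc : (1 : ℝ) ≤ 2 ^ (β + 1) * 2 ^ (γ + 1) :=
    one_le_mul_of_one_le_of_one_le (one_le_rpow one_le_two (by linarith))
      (one_le_rpow one_le_two (by linarith))
  have hp := plateau_pos (α := α) hu
  rcases le_or_gt (2 * ρ) (plateau α u) with h2 | h2
  · rw [profile_of_le_plateau h2, profile_of_le_plateau (by linarith)]
    exact le_mul_of_one_le_left (rpow_pos_of_pos hu _).le hc
  rw [profile_of_plateau_lt h2, mul_left_comm]
  rcases le_or_gt ρ (plateau α u) with h1 | h1
  · -- the profile does not drop at the edge of the plateau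
    calc profile α β γ u ρ = u ^ (-1 / α) := profile_of_le_plateau h1
      _ ≤ u ^ (β / α) * tail β γ (plateau α u) := by
        rw [rpow_mul_tail_plateau hβ hu]; exact le_max_left _ _
      _ ≤ u ^ (β / α) * (2 ^ (β + 1) * 2 ^ (γ + 1) * tail β γ (2 * plateau α u)) := by
        gcongr; exact tail_le_two_rpow_mul_tail_two_mul hβ hγ hp
      _ ≤ u ^ (β / α) * (2 ^ (β + 1) * 2 ^ (γ + 1) * tail β γ (2 * ρ)) := by
        gcongr
        exact tail_antitoneOn hβ hγ (hp.trans h2) (by linarith : 0 < 2 * plateau α u)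
          (by linarith)
  · rw [profile_of_plateau_lt h1]
    gcongr
    exact tail_le_two_rpow_mul_tail_two_mul hβ hγ (hp.trans h1)

lemma profile_le_profile (hα : 0 < α) (hβ : 0 < β) (hγ : 0 < γ) (hu : 0 < u) (hut : u ≤ t)
    {ρ' : ℝ} (hρ' : plateau α t < ρ') (hρ : ρ' ≤ ρ) :
    profile α β γ u ρ ≤ profile α β γ t ρ' := by
  have ht := hu.trans_le hut
  have hρ'0 : 0 < ρ' := (plateau_pos ht).trans hρ'
  rw [profile_of_plateau_lt ((plateau_mono hα hu.le hut).trans_lt (hρ'.trans_le hρ)),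
    profile_of_plateau_lt hρ']
  exact mul_le_mul (rpow_le_rpow hu.le hut (by positivity))
    (tail_antitoneOn hβ hγ hρ'0 (hρ'0.trans_le hρ) hρ) (tail_pos (hρ'0.trans_le hρ)).le
    (rpow_nonneg ht.le _)

lemma profile_le_of_le_two_plateau (hα : 0 < α) (hβ : 0 < β) (hγ : 0 < γ) (ht : 0 < t)
    (htu : t ≤ 2 * u) (huT : u ≤ T) {r : ℝ} (hr : r ≤ 2 * plateau α t) :
    profile α β γ u ρ ≤
      max 1 (T ^ ((β + 1) / α)) * 2 ^ (1 / α) * (2 ^ (β + 1) * 2 ^ (γ + 1)) *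
        profile α β γ t r := by
  have hu : 0 < u := by linarith
  have hhalf : u ^ (-1 / α) ≤ 2 ^ (1 / α) * t ^ (-1 / α) := by
    calc u ^ (-1 / α) ≤ (t / 2) ^ (-1 / α) :=
          rpow_le_rpow_of_nonpos (by positivity) (by linarith)
            (by rw [neg_div]; exact neg_nonpos.mpr (by positivity))
      _ = 2 ^ (1 / α) * t ^ (-1 / α) := by
          rw [div_rpow ht.le zero_le_two, neg_div, rpow_neg zero_le_two, div_inv_eq_mul,
            mul_comm]
  calc profile α β γ u ρ ≤ max 1 (T ^ ((β + 1) / α)) * u ^ (-1 / α) :=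
        profile_le_mul_rpow_neg hα hβ hγ hu huT
    _ ≤ max 1 (T ^ ((β + 1) / α)) * (2 ^ (1 / α) * t ^ (-1 / α)) := by gcongr
    _ = max 1 (T ^ ((β + 1) / α)) * 2 ^ (1 / α) * profile α β γ t (r / 2) := by
        rw [profile_of_le_plateau (by linarith)]; ring
    _ ≤ max 1 (T ^ ((β + 1) / α)) * 2 ^ (1 / α) *
          (2 ^ (β + 1) * 2 ^ (γ + 1) * profile α β γ t (2 * (r / 2))) := by
        gcongr
        exact profile_le_two_rpow_mul_profile_two_mul hβ hγ ht
    _ = _ := by rw [mul_div_cancel₀ r two_ne_zero]; ring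

lemma profile_le_of_two_plateau_lt (hα : 0 < α) (hβ : 0 < β) (hγ : 0 < γ) (hu : 0 < u)
    (hut : u ≤ t) {r : ℝ} (hr : 2 * plateau α t < r) (hρ : r ≤ 2 * ρ) :
    profile α β γ u ρ ≤ 2 ^ (β + 1) * 2 ^ (γ + 1) * profile α β γ t r :=
  calc profile α β γ u ρ ≤ profile α β γ t (r / 2) :=
        profile_le_profile hα hβ hγ hu hut (by linarith) (by linarith)
    _ ≤ 2 ^ (β + 1) * 2 ^ (γ + 1) * profile α β γ t (2 * (r / 2)) :=
        profile_le_two_rpow_mul_profile_two_mul hβ hγ (hu.trans_le hut)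
    _ = 2 ^ (β + 1) * 2 ^ (γ + 1) * profile α β γ t r := by rw [mul_div_cancel₀ r two_ne_zero]

lemma profile_le_or_profile_le (hα : 0 < α) (hβ : 0 < β) (hγ : 0 < γ) {u₁ u₂ ρ₁ ρ₂ r : ℝ}
    (hu₁ : 0 < u₁) (hu₂ : 0 < u₂) (hT : u₁ + u₂ ≤ T) (hr : r ≤ ρ₁ + ρ₂) :
    let D := max 1 (T ^ ((β + 1) / α)) * 2 ^ (1 / α) * (2 ^ (β + 1) * 2 ^ (γ + 1))
    profile α β γ u₁ ρ₁ ≤ D * profile α β γ (u₁ + u₂) r ∨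
      profile α β γ u₂ ρ₂ ≤ D * profile α β γ (u₁ + u₂) r := by
  intro D
  have ht : 0 < u₁ + u₂ := add_pos hu₁ hu₂
  rcases le_or_gt r (2 * plateau α (u₁ + u₂)) with hnear | hfar
  · rcases le_total u₁ u₂ with h | h
    · exact .inr (profile_le_of_le_two_plateau hα hβ hγ ht (by linarith) (by linarith) hnear)
    · exact .inl (profile_le_of_le_two_plateau hα hβ hγ ht (by linarith) (by linarith) hnear)
  have hD : 2 ^ (β + 1) * 2 ^ (γ + 1) * profile α β γ (u₁ + u₂) r ≤
      D * profile α β γ (u₁ + u₂) r := by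
    refine mul_le_mul_of_nonneg_right (le_mul_of_one_le_left (by positivity) ?_)
      (profile_pos ht).le
    exact one_le_mul_of_one_le_of_one_le (le_max_left _ _)
      (one_le_rpow one_le_two (by positivity))
  rcases le_total r (2 * ρ₁) with h | h
  · exact .inl ((profile_le_of_two_plateau_lt hα hβ hγ hu₁ (by linarith) hfar h).trans hD)
  · exact .inr
      ((profile_le_of_two_plateau_lt hα hβ hγ hu₂ (by linarith) hfar (by linarith)).trans hD)

lemma integrableOn_profile_Ioi (hβ : 0 < β) (hγ : 0 < γ) (hu : 0 < u) :
    IntegrableOn (profile α β γ u) (Ioi 0) := by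
  have hp := plateau_pos (α := α) hu
  rw [← Ioc_union_Ioi_eq_Ioi hp.le]
  refine IntegrableOn.union ?_ ?_
  · exact (integrableOn_const measure_Ioc_lt_top.ne).congr_fun
      (fun ρ hρ => (profile_of_le_plateau hρ.2).symm) measurableSet_Ioc
  · exact IntegrableOn.congr_fun ((integrableOn_tail_Ioi hβ hγ hp).const_mul (u ^ (β / α)))
      (fun ρ hρ => (profile_of_plateau_lt hρ).symm) measurableSet_Ioi

lemma setIntegral_profile_Ioi_le (hα : 0 < α) (hβ : 0 < β) (hγ : 0 < γ) (hu : 0 < u)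
    (huT : u ≤ T) :
    ∫ ρ in Ioi 0, profile α β γ u ρ ≤ 1 + max 1 (T ^ (β / α)) * (1 / β + 1 / γ) := by
  have hp := plateau_pos (α := α) hu
  have hint := integrableOn_profile_Ioi (α := α) hβ hγ hu
  have hM : u ^ (β / α) ≤ max 1 (T ^ (β / α)) := rpow_le_max_one_rpow hu.le huT (by positivity)
  have hflat : ∫ ρ in Ioc 0 (plateau α u), profile α β γ u ρ ≤ 1 := by
    rw [setIntegral_congr_fun measurableSet_Ioc (fun ρ hρ => profile_of_le_plateau hρ.2),
      setIntegral_const, Real.volume_real_Ioc_of_le hp.le, smul_eq_mul, sub_zero]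
    calc plateau α u * u ^ (-1 / α) ≤ u ^ (1 / α) * u ^ (-1 / α) := by
          gcongr; exact plateau_le_rpow
      _ = 1 := by rw [← rpow_add hu, show 1 / α + -1 / α = 0 by ring, rpow_zero]
  have htail : ∫ ρ in Ioi (plateau α u), profile α β γ u ρ ≤
      max 1 (T ^ (β / α)) * (1 / β + 1 / γ) := by
    rw [setIntegral_congr_fun measurableSet_Ioi (fun ρ hρ => profile_of_plateau_lt hρ),
      integral_const_mul]
    calc u ^ (β / α) * ∫ ρ in Ioi (plateau α u), tail β γ ρ
        ≤ u ^ (β / α) * (plateau α u ^ (-β) / β + 1 / γ) := by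
          gcongr; exact setIntegral_tail_Ioi_le hβ hγ hp plateau_le_one
      _ = u ^ (β / α) * plateau α u ^ (-β) / β + u ^ (β / α) / γ := by ring
      _ ≤ max 1 (T ^ (β / α)) / β + max 1 (T ^ (β / α)) / γ := by
          rw [rpow_mul_plateau_rpow_neg hu β hβ.le, sub_self, zero_div, rpow_zero]
          gcongr
      _ = max 1 (T ^ (β / α)) * (1 / β + 1 / γ) := by ring
  rw [← Ioc_union_Ioi_eq_Ioi hp.le, setIntegral_union Ioc_disjoint_Ioi_same measurableSet_Ioi
    (hint.mono_set Ioc_subset_Ioi_self) (hint.mono_set (Ioi_subset_Ioi hp.le))]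
  linarith

lemma integrable_profile_abs_sub (hβ : 0 < β) (hγ : 0 < γ) (hu : 0 < u) (a : ℝ) :
    Integrable fun z => profile α β γ u |z - a| :=
  (integrable_comp_abs_of_integrableOn_Ioi (integrableOn_profile_Ioi hβ hγ hu)).comp_sub_right a

lemma integral_profile_abs_sub_le (hα : 0 < α) (hβ : 0 < β) (hγ : 0 < γ) (hu : 0 < u)
    (huT : u ≤ T) (a : ℝ) :
    ∫ z, profile α β γ u |z - a| ≤ 2 * (1 + max 1 (T ^ (β / α)) * (1 / β + 1 / γ)) := by
  rw [integral_sub_right_eq_self (fun z => profile α β γ u |z|) a,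
    integral_comp_abs (f := profile α β γ u)]
  gcongr
  exact setIntegral_profile_Ioi_le hα hβ hγ hu huT

end G3

open G3 in
theorem stmt17_general (α β γ T : ℝ) (hα : 0 < α) (hβ : 0 < β) (hγ : 0 < γ) :
    ∃ C > 0, ∀ t ∈ Set.Ioc (0:ℝ) T, ∀ s ∈ Set.Ioo (0:ℝ) t, ∀ x y : ℝ,
      (∫ z : ℝ, G3 α β γ (t - s) x z * G3 α β γ s z y) ≤ C * G3 α β γ t x y := by
  let D := max 1 (T ^ ((β + 1) / α)) * 2 ^ (1 / α) * (2 ^ (β + 1) * 2 ^ (γ + 1))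
  let K := 2 * (1 + max 1 (T ^ (β / α)) * (1 / β + 1 / γ))
  refine ⟨2 * K * D, by positivity, ?_⟩
  rintro t ⟨ht, htT⟩ s ⟨hs, hst⟩ x y
  have hts : 0 < t - s := sub_pos.mpr hst
  simp only [G3_eq_profile]
  have hf := integrable_profile_abs_sub (α := α) hβ hγ hts x
  have hg : Integrable fun z => profile α β γ s |y - z| := by
    simp_rw [abs_sub_comm y]; exact integrable_profile_abs_sub hβ hγ hs y
  have hgK : ∫ z, profile α β γ s |y - z| ≤ K := by
    simp_rw [abs_sub_comm y]; exact integral_profile_abs_sub_le hα hβ hγ hs (hst.le.trans htT) y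
  calc ∫ z, profile α β γ (t - s) |z - x| * profile α β γ s |y - z|
      ≤ D * profile α β γ t |y - x| *
          ((∫ z, profile α β γ (t - s) |z - x|) + ∫ z, profile α β γ s |y - z|) := by
        refine integral_mul_le_of_forall_le_or_le hf hg (fun _ => (profile_pos hts).le)
          (fun _ => (profile_pos hs).le) fun z => ?_
        simpa only [sub_add_cancel] using profile_le_or_profile_le hα hβ hγ hts hs
          (by linarith) ((abs_sub_le y z x).trans_eq (add_comm _ _))
    _ ≤ D * profile α β γ t |y - x| * (K + K) := by
        have hG := profile_pos (α := α) (β := β) (γ := γ) (ρ := |y - x|) ht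
        gcongr
        exact integral_profile_abs_sub_le hα hβ hγ hts (by linarith) x
    _ = 2 * K * D * profile α β γ t |y - x| := by ring

theorem stmt17 (α β γ T : ℝ) (hα : 0 < α) (hβ : 0 < β) (hγ : 0 < γ) (hT : 0 < T) :
    ∃ C > 0, ∀ t ∈ Set.Ioc (0:ℝ) T, ∀ s ∈ Set.Ioo (0:ℝ) t, ∀ x y : ℝ,
      (∫ z : ℝ, G3 α β γ (t - s) x z * G3 α β γ s z y) ≤ C * G3 α β γ t x y :=
  stmt17_general α β γ T hα hβ hγ
end
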